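/- The partial score with respect to the regression parameters has vanishing conditional expectation (so the score is a martingale difference sequence): for all real numbers λ > 0, k > 0, π ∈ (0,1), every natural number n ≥ 1 and all vectors a, b ∈ ℝⁿ, setting p = k/(k+λ) and q = π + (1−π)p^k, one has f(0)·(1/q)·(a + (1−π)·k·p^{k−1}·b − p^k·a) + ∑_{m=1}^∞ f(m)·( −(1/(1−π))·a + (k/p)·b − (m/(1−p))·b ) = 0 (the zero vector of ℝⁿ). -/

import Mathlib

/-!
The atom at zero has mass `q`, so the first term is `a + (1-π) k p^(k-1) b - p^k a`. The sum over
`m ≥ 1` only needs the total mass `(1-π)(1 - p^k)` and the first moment `(1-π) λ` of the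
zero-inflated law on `m ≥ 1`; both come from the binomial series
`∑ Γ(m+s)/m! xᵐ = Γ(s) (1-x)^(-s)` with `x = λ/(k+λ) = 1 - p`. After that the coefficient of `a`
vanishes trivially and that of `b` because `k/p = λ/(1-p) = k+λ`.
-/

/-- The negative binomial pmf with real shape `k` (and `p = k/(k+λ)`). -/
noncomputable def nbPmf (lam k : ℝ) (m : ℕ) : ℝ :=
  Real.Gamma ((m : ℝ) + k) / ((m.factorial : ℝ) * Real.Gamma k) *
    (lam / (k + lam)) ^ m * (k / (k + lam)) ^ k

/-- The zero-inflated negative binomial (ZINB) pmf on ℕ. -/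
noncomputable def zinbPmf (lam k pi : ℝ) (m : ℕ) : ℝ :=
  (if m = 0 then pi else 0) + (1 - pi) * nbPmf lam k m

open Polynomial
open scoped Nat

theorem Real.Gamma_add_nat_eq_ascPochhammer_mul {s : ℝ} (hs : ∀ m : ℕ, s ≠ -m) (n : ℕ) :
    Real.Gamma (s + n) = (ascPochhammer ℝ n).eval s * Real.Gamma s := by
  induction n with
  | zero => simp
  | succ n ih =>
    have hsn : s + n ≠ 0 := fun h => hs n (by linarith)
    rw [Nat.cast_succ, ← add_assoc, Real.Gamma_add_one hsn, ih, ascPochhammer_succ_eval]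
    ring

theorem Ring.choose_add_sub_one_eq_Gamma_div {s : ℝ} (hs : ∀ m : ℕ, s ≠ -m) (n : ℕ) :
    Ring.choose (s + n - 1) n = Real.Gamma (s + n) / (n ! * Real.Gamma s) := by
  have hΓ : Real.Gamma s ≠ 0 := Real.Gamma_ne_zero hs
  rw [Ring.choose_eq_smul, descPochhammer_smeval_eq_ascPochhammer, ascPochhammer_smeval_eq_eval,
    Real.Gamma_add_nat_eq_ascPochhammer_mul hs, smul_eq_mul]
  ring_nf
  field_simp

theorem Real.hasSum_Gamma_add_div_factorial_mul_pow {s x : ℝ} (hs : ∀ m : ℕ, s ≠ -m)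
    (hx : |x| < 1) :
    HasSum (fun m : ℕ => Real.Gamma (m + s) / m ! * x ^ m) (Real.Gamma s / (1 - x) ^ s) := by
  have hsum := (Real.one_div_one_sub_rpow_hasFPowerSeriesOnBall_zero s).hasSum
    (y := x) (by simpa [enorm_eq_nnnorm, ← NNReal.coe_lt_coe] using hx)
  simp only [FormalMultilinearSeries.ofScalars_apply_eq, zero_add, smul_eq_mul,
    Ring.choose_add_sub_one_eq_Gamma_div hs] at hsum
  have := hsum.mul_left (Real.Gamma s)
  rw [mul_one_div] at this
  refine this.congr_fun fun m => ?_
  rw [add_comm (m : ℝ)]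
  field_simp [Real.Gamma_ne_zero hs]

theorem Real.hasSum_nat_mul_Gamma_add_div_factorial_mul_pow {s x : ℝ} (hs : ∀ m : ℕ, s ≠ -m)
    (hx : |x| < 1) :
    HasSum (fun m : ℕ => m * (Real.Gamma (m + s) / m ! * x ^ m))
      (s * x * Real.Gamma s / (1 - x) ^ (s + 1)) := by
  have hs' : ∀ m : ℕ, s + 1 ≠ -m := fun m h => hs (m + 1) (by push_cast; linarith)
  have hshift := (Real.hasSum_Gamma_add_div_factorial_mul_pow hs' hx).mul_left x
  rw [Real.Gamma_add_one (by simpa using hs 0)] at hshift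
  refine (hasSum_nat_add_iff' 1).mp ?_
  simp only [Finset.range_one, Finset.sum_singleton, CharP.cast_eq_zero, zero_mul, sub_zero]
  rw [show s * x * Real.Gamma s / (1 - x) ^ (s + 1)
    = x * (s * Real.Gamma s / (1 - x) ^ (s + 1)) by ring]
  refine hshift.congr_fun fun m => ?_
  rw [Nat.factorial_succ, pow_succ]
  push_cast
  rw [show (m : ℝ) + 1 + s = m + (s + 1) by ring]
  field_simp

section NegativeBinomial

variable {lam k : ℝ}

theorem nbPmf_zero (hk : 0 < k) : nbPmf lam k 0 = (k / (k + lam)) ^ k := by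
  simp [nbPmf, (Real.Gamma_pos_of_pos hk).ne']

theorem nbPmf_eq_mul (m : ℕ) :
    nbPmf lam k m = Real.Gamma (m + k) / m ! * (lam / (k + lam)) ^ m *
      ((k / (k + lam)) ^ k / Real.Gamma k) := by
  rw [nbPmf]
  ring

theorem ne_neg_natCast_of_pos (hk : 0 < k) (m : ℕ) : k ≠ -m := by
  linarith [m.cast_nonneg (α := ℝ)]

variable (hk : 0 < k) (hlam : 0 ≤ lam)
include hk hlam

theorem abs_div_add_lt_one : |lam / (k + lam)| < 1 := by
  rw [abs_of_nonneg (by positivity), div_lt_one (by positivity)]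
  linarith

theorem one_sub_div_add_eq : 1 - lam / (k + lam) = k / (k + lam) := by
  rw [one_sub_div (by positivity), add_sub_cancel_right]

theorem hasSum_nbPmf : HasSum (nbPmf lam k) 1 := by
  have hΓ := (Real.hasSum_Gamma_add_div_factorial_mul_pow (ne_neg_natCast_of_pos hk)
    (abs_div_add_lt_one hk hlam)).mul_right ((k / (k + lam)) ^ k / Real.Gamma k)
  rw [one_sub_div_add_eq hk hlam, show Real.Gamma k / (k / (k + lam)) ^ k *
    ((k / (k + lam)) ^ k / Real.Gamma k) = 1 by field_simp [(Real.Gamma_pos_of_pos hk).ne']] at hΓ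
  exact hΓ.congr_fun nbPmf_eq_mul

theorem hasSum_nat_mul_nbPmf : HasSum (fun m : ℕ => m * nbPmf lam k m) lam := by
  have hΓ := (Real.hasSum_nat_mul_Gamma_add_div_factorial_mul_pow (ne_neg_natCast_of_pos hk)
    (abs_div_add_lt_one hk hlam)).mul_right ((k / (k + lam)) ^ k / Real.Gamma k)
  rw [one_sub_div_add_eq hk hlam, Real.rpow_add_one (by positivity), show
    k * (lam / (k + lam)) * Real.Gamma k / ((k / (k + lam)) ^ k * (k / (k + lam))) *
      ((k / (k + lam)) ^ k / Real.Gamma k) = lam by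
    field_simp [(Real.Gamma_pos_of_pos hk).ne']] at hΓ
  refine hΓ.congr_fun fun m => ?_
  rw [nbPmf_eq_mul]
  ring

end NegativeBinomial

section ZeroInflated

variable {lam k pi : ℝ}

theorem zinbPmf_zero (hk : 0 < k) :
    zinbPmf lam k pi 0 = pi + (1 - pi) * (k / (k + lam)) ^ k := by
  rw [zinbPmf, nbPmf_zero hk, if_pos rfl]

theorem zinbPmf_succ (m : ℕ) : zinbPmf lam k pi (m + 1) = (1 - pi) * nbPmf lam k (m + 1) := by
  rw [zinbPmf, if_neg m.succ_ne_zero, zero_add]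

variable (hk : 0 < k) (hlam : 0 ≤ lam)
include hk hlam

theorem hasSum_zinbPmf_succ :
    HasSum (fun m : ℕ => zinbPmf lam k pi (m + 1)) ((1 - pi) * (1 - (k / (k + lam)) ^ k)) := by
  have h := (hasSum_nat_add_iff' 1).mpr (hasSum_nbPmf hk hlam)
  rw [Finset.sum_range_one, nbPmf_zero hk] at h
  simpa only [zinbPmf_succ] using h.mul_left (1 - pi)

theorem hasSum_succ_mul_zinbPmf_succ :
    HasSum (fun m : ℕ => ((m : ℝ) + 1) * zinbPmf lam k pi (m + 1)) ((1 - pi) * lam) := by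
  have h := (hasSum_nat_add_iff' 1).mpr (hasSum_nat_mul_nbPmf hk hlam)
  rw [Finset.sum_range_one, Nat.cast_zero, zero_mul, sub_zero] at h
  refine (h.mul_left (1 - pi)).congr_fun fun m => ?_
  rw [zinbPmf_succ]
  push_cast
  ring

end ZeroInflated

theorem zinb_score_regression_mean_zero_general
    (lam k pi : ℝ) (hlam : 0 < lam) (hk : 0 < k) (hpi : pi ∈ Set.Ioo (0 : ℝ) 1)
    (n : ℕ) (a b : Fin n → ℝ)
    (p q : ℝ) (hp : p = k / (k + lam)) (hq : q = pi + (1 - pi) * p ^ k) :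
    (zinbPmf lam k pi 0 * (1 / q)) •
        (a + ((1 - pi) * k * p ^ (k - 1)) • b - (p ^ k) • a) +
      (∑' m : ℕ, zinbPmf lam k pi (m + 1) •
        ((-(1 / (1 - pi))) • a + (k / p) • b -
          (((m : ℕ) + 1 : ℝ) / (1 - p)) • b))
      = (0 : Fin n → ℝ) := by
  obtain ⟨hpi0, hpi1⟩ := hpi
  have hp0 : 0 < p := hp ▸ by positivity
  have hq0 : 0 < q := hq ▸ by nlinarith [Real.rpow_pos_of_pos hp0 k]
  have hsum : HasSum (fun m : ℕ => zinbPmf lam k pi (m + 1) •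
      ((-(1 / (1 - pi))) • a + (k / p) • b - (((m : ℕ) + 1 : ℝ) / (1 - p)) • b))
      (((1 - pi) * (1 - p ^ k)) • ((-(1 / (1 - pi))) • a + (k / p) • b)
        - ((1 - pi) * lam / (1 - p)) • b) := by
    rw [hp]
    refine (((hasSum_zinbPmf_succ hk hlam.le).smul_const _).sub
      (((hasSum_succ_mul_zinbPmf_succ hk hlam.le).div_const _).smul_const b)).congr_fun
      fun m => ?_
    module
  have hcoef_a : 1 - p ^ k - (1 - pi) * (1 - p ^ k) * (1 / (1 - pi)) = 0 := by
    field_simp [sub_ne_zero.mpr hpi1.ne']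
    ring
  have hcoef_b : (1 - pi) * k * p ^ (k - 1) + (1 - pi) * (1 - p ^ k) * (k / p)
      - (1 - pi) * lam / (1 - p) = 0 := by
    rw [Real.rpow_sub_one hp0.ne', hp]
    field_simp [hlam.ne']
    ring
  rw [hsum.tsum_eq, zinbPmf_zero hk, ← hp, ← hq, mul_one_div_cancel hq0.ne', one_smul]
  linear_combination (norm := module) hcoef_a • a + hcoef_b • b

/-- The partial score with respect to the regression parameters has vanishing
conditional expectation under the ZINB distribution: here `a` and `b` play the
roles of the gradients `∂π/∂ν` and `∂p/∂ν`, and the sum over `m ≥ 1` is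
written as a sum over `m : ℕ` evaluated at `m + 1`. -/
theorem zinb_score_regression_mean_zero
    (lam k pi : ℝ) (hlam : 0 < lam) (hk : 0 < k) (hpi : pi ∈ Set.Ioo (0 : ℝ) 1)
    (n : ℕ) (hn : 1 ≤ n) (a b : Fin n → ℝ)
    (p q : ℝ) (hp : p = k / (k + lam)) (hq : q = pi + (1 - pi) * p ^ k) :
    (zinbPmf lam k pi 0 * (1 / q)) •
        (a + ((1 - pi) * k * p ^ (k - 1)) • b - (p ^ k) • a) +
      (∑' m : ℕ, zinbPmf lam k pi (m + 1) •
        ((-(1 / (1 - pi))) • a + (k / p) • b -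
          (((m : ℕ) + 1 : ℝ) / (1 - p)) • b))
      = (0 : Fin n → ℝ) :=
  zinb_score_regression_mean_zero_general lam k pi hlam hk hpi n a b p q hp hq
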